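/- arXiv:1309.4637 — 8 statements merged into one kernel-verified Lean document; each statement's English description precedes it below -/
import Mathlib

section
/- The coindeterminacy of ⟨ā₀,ā₁,ā₂⟩ and ⟨ā₁,ā₂,ā₃⟩, when nonempty, is a coset of the subgroup (ā₀ \\ ā₂) + (ā₁ // ā₃) in H: the difference of any two elements of the coindeterminacy lies in (ā₀ \\ ā₂) + (ā₁ // ā₃), and the sum of any element of the coindeterminacy with any element of (ā₀ \\ ā₂) + (ā₁ // ā₃) again lies in the coindeterminacy. -/
def memLD {A : Type*} [Ring A] (d : A →+ A) (a b x : A) : Prop :=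
  d x = 0 ∧ ∃ z, d z = 0 ∧ ∃ u, d u = a * x + z * b

def memRD {A : Type*} [Ring A] (d : A →+ A) (a b x : A) : Prop :=
  d x = 0 ∧ ∃ z, d z = 0 ∧ ∃ u, d u = a * z + x * b

/-- s represents an element of the coindeterminacy of ⟨ā₀,ā₁,ā₂⟩ and ⟨ā₁,ā₂,ā₃⟩:
s is homologous to x + y for suitable x, y. -/
def coindMem {A : Type*} [Ring A] (d : A →+ A) (a₀ a₁ a₂ a₃ s : A) : Prop :=
  ∃ x y, d x = a₁ * a₂ ∧ (∃ z, d z = a₀ * a₁ ∧ ∃ u, d u = a₀ * x + z * a₂) ∧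
    d y = a₁ * a₂ ∧ (∃ w, d w = a₂ * a₃ ∧ ∃ u, d u = a₁ * w + y * a₃) ∧
    ∃ u, d u = s + x + y

/-!
All conditions involved are affine in the chosen null-homotopies: if `x` and `x'` both
complete `a₁a₂` to a defining system of `⟨ā₀,ā₁,ā₂⟩` with value zero, then `x - x'` is a
cycle representing an element of `ā₀ \\ ā₂`, and conversely adding such a representative to `x`
gives another admissible choice; symmetrically on the right with `ā₁ // ā₃`. Hence the
coindeterminacy is a coset, over any ring; characteristic two only turns the differences into
the sums of the statement.
-/

section

variable {A : Type*} [Ring A] (d : A →+ A)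

/-- `x` is the `a₁a₂`-entry of a defining system of `⟨a₀, a₁, a₂⟩` whose value is a boundary. -/
def LeftDefining (a₀ a₁ a₂ x : A) : Prop :=
  d x = a₁ * a₂ ∧ ∃ z, d z = a₀ * a₁ ∧ ∃ u, d u = a₀ * x + z * a₂

/-- `y` is the `a₁a₂`-entry of a defining system of `⟨a₁, a₂, a₃⟩` whose value is a boundary. -/
def RightDefining (a₁ a₂ a₃ y : A) : Prop :=
  d y = a₁ * a₂ ∧ ∃ w, d w = a₂ * a₃ ∧ ∃ u, d u = a₁ * w + y * a₃

variable {d}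

theorem coindMem_iff {a₀ a₁ a₂ a₃ s : A} :
    coindMem d a₀ a₁ a₂ a₃ s ↔
      ∃ x y, LeftDefining d a₀ a₁ a₂ x ∧ RightDefining d a₁ a₂ a₃ y ∧ ∃ u, d u = s + x + y := by
  simp only [coindMem, LeftDefining, RightDefining, and_assoc]

namespace LeftDefining

variable {a₀ a₁ a₂ x : A}

theorem memLD_sub {x' : A} (hx : LeftDefining d a₀ a₁ a₂ x) (hx' : LeftDefining d a₀ a₁ a₂ x') :
    memLD d a₀ a₂ (x - x') := by
  obtain ⟨hdx, z, hz, u, hu⟩ := hx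
  obtain ⟨hdx', z', hz', u', hu'⟩ := hx'
  refine ⟨by rw [map_sub, hdx, hdx', sub_self], z - z', by rw [map_sub, hz, hz', sub_self],
    u - u', ?_⟩
  rw [map_sub, hu, hu', mul_sub, sub_mul]
  abel

theorem add_memLD {c : A} (hx : LeftDefining d a₀ a₁ a₂ x) (hc : memLD d a₀ a₂ c) :
    LeftDefining d a₀ a₁ a₂ (x + c) := by
  obtain ⟨hdx, z, hz, u, hu⟩ := hx
  obtain ⟨hdc, z', hz', u', hu'⟩ := hc
  refine ⟨by rw [map_add, hdx, hdc, add_zero], z + z', by rw [map_add, hz, hz', add_zero],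
    u + u', ?_⟩
  rw [map_add, hu, hu', mul_add, add_mul]
  abel

end LeftDefining

namespace RightDefining

variable {a₁ a₂ a₃ y : A}

theorem memRD_sub {y' : A} (hy : RightDefining d a₁ a₂ a₃ y) (hy' : RightDefining d a₁ a₂ a₃ y') :
    memRD d a₁ a₃ (y - y') := by
  obtain ⟨hdy, w, hw, u, hu⟩ := hy
  obtain ⟨hdy', w', hw', u', hu'⟩ := hy'
  refine ⟨by rw [map_sub, hdy, hdy', sub_self], w - w', by rw [map_sub, hw, hw', sub_self],
    u - u', ?_⟩
  rw [map_sub, hu, hu', mul_sub, sub_mul]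
  abel

theorem add_memRD {c : A} (hy : RightDefining d a₁ a₂ a₃ y) (hc : memRD d a₁ a₃ c) :
    RightDefining d a₁ a₂ a₃ (y + c) := by
  obtain ⟨hdy, w, hw, u, hu⟩ := hy
  obtain ⟨hdc, w', hw', u', hu'⟩ := hc
  refine ⟨by rw [map_add, hdy, hdc, add_zero], w + w', by rw [map_add, hw, hw', add_zero],
    u + u', ?_⟩
  rw [map_add, hu, hu', mul_add, add_mul]
  abel

end RightDefining

namespace coindMem

variable {a₀ a₁ a₂ a₃ s : A}

theorem exists_sub_eq {t : A} (hs : coindMem d a₀ a₁ a₂ a₃ s) (ht : coindMem d a₀ a₁ a₂ a₃ t) :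
    ∃ c₁ c₂, memLD d a₀ a₂ c₁ ∧ memRD d a₁ a₃ c₂ ∧ ∃ u, d u = (s - t) + (c₁ + c₂) := by
  obtain ⟨x, y, hx, hy, u, hu⟩ := coindMem_iff.mp hs
  obtain ⟨x', y', hx', hy', u', hu'⟩ := coindMem_iff.mp ht
  refine ⟨x - x', y - y', hx.memLD_sub hx', hy.memRD_sub hy', u - u', ?_⟩
  rw [map_sub, hu, hu']
  abel

theorem sub_sub {c₁ c₂ : A} (hs : coindMem d a₀ a₁ a₂ a₃ s) (hc₁ : memLD d a₀ a₂ c₁)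
    (hc₂ : memRD d a₁ a₃ c₂) : coindMem d a₀ a₁ a₂ a₃ (s - c₁ - c₂) := by
  obtain ⟨x, y, hx, hy, u, hu⟩ := coindMem_iff.mp hs
  refine coindMem_iff.mpr ⟨x + c₁, y + c₂, hx.add_memLD hc₁, hy.add_memRD hc₂, u, ?_⟩
  rw [hu]
  abel

end coindMem

end

theorem stmt_7_general {A : Type*} [Ring A] (d : A →+ A)
    (hchar : ∀ a : A, a + a = 0)
    (a₀ a₁ a₂ a₃ : A) :
    (∀ s t, coindMem d a₀ a₁ a₂ a₃ s → coindMem d a₀ a₁ a₂ a₃ t →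
      ∃ c₁ c₂, memLD d a₀ a₂ c₁ ∧ memRD d a₁ a₃ c₂ ∧
        ∃ u, d u = (s + t) + (c₁ + c₂)) ∧
    (∀ s c₁ c₂, coindMem d a₀ a₁ a₂ a₃ s → memLD d a₀ a₂ c₁ →
      memRD d a₁ a₃ c₂ → coindMem d a₀ a₁ a₂ a₃ (s + c₁ + c₂)) := by
  have hsub : ∀ a b : A, a - b = a + b := fun a b => by
    rw [sub_eq_add_neg, neg_eq_of_add_eq_zero_left (hchar b)]
  refine ⟨fun s t hs ht => ?_, fun s c₁ c₂ hs hc₁ hc₂ => ?_⟩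
  · simpa only [hsub] using hs.exists_sub_eq ht
  · simpa only [hsub] using hs.sub_sub hc₁ hc₂

/-- The coindeterminacy is a coset of (ā₀ \\ ā₂) + (ā₁ // ā₃): differences of
two elements lie in the subgroup, and the coindeterminacy is stable under
adding elements of the subgroup. -/
theorem stmt_7 {A : Type*} [Ring A] (d : A →+ A)
    (hchar : ∀ a : A, a + a = 0)
    (hdd : ∀ a : A, d (d a) = 0)
    (hleib : ∀ u v : A, d (u * v) = d u * v + u * d v)
    (a₀ a₁ a₂ a₃ : A)
    (hc0 : d a₀ = 0) (hc1 : d a₁ = 0) (hc2 : d a₂ = 0) (hc3 : d a₃ = 0)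
    (hb01 : ∃ u, d u = a₀ * a₁) (hb12 : ∃ u, d u = a₁ * a₂) (hb23 : ∃ u, d u = a₂ * a₃) :
    (∀ s t, coindMem d a₀ a₁ a₂ a₃ s → coindMem d a₀ a₁ a₂ a₃ t →
      ∃ c₁ c₂, memLD d a₀ a₂ c₁ ∧ memRD d a₁ a₃ c₂ ∧
        ∃ u, d u = (s + t) + (c₁ + c₂)) ∧
    (∀ s c₁ c₂, coindMem d a₀ a₁ a₂ a₃ s → memLD d a₀ a₂ c₁ →
      memRD d a₁ a₃ c₂ → coindMem d a₀ a₁ a₂ a₃ (s + c₁ + c₂)) :=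
  stmt_7_general d hchar a₀ a₁ a₂ a₃
end

section
/- The fourfold Massey product ⟨ā₀,ā₁,ā₂,ā₃⟩ is defined (i.e., there exist a₀₁, a₁₂, a₂₃ with d(a₀₁)=a₀a₁, d(a₁₂)=a₁a₂, d(a₂₃)=a₂a₃ such that a₀a₁₂ + a₀₁a₂ and a₁a₂₃ + a₁₂a₃ are boundaries) if and only if the zero class belongs to the coindeterminacy of ⟨ā₀,ā₁,ā₂⟩ and ⟨ā₁,ā₂,ā₃⟩. -/
/-! A defining system gives `x = y = a₁₂`. Conversely, if `x + y = d v`, then `x` itself can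
serve as `a₁₂`: in characteristic two `a₁ w + x a₃ = (a₁ w + y a₃) + (x + y) a₃`, and
`(x + y) a₃ = d (v a₃)` because `a₃` is a cycle. -/

theorem AddMonoidHom.mul_mem_range_of_map_eq_zero {A : Type*} [Ring A] {d : A →+ A}
    (hleib : ∀ u v : A, d (u * v) = d u * v + u * d v) {b c : A}
    (hb : b ∈ d.range) (hc : d c = 0) : b * c ∈ d.range := by
  obtain ⟨v, rfl⟩ := hb
  exact ⟨v * c, by rw [hleib, hc, mul_zero, add_zero]⟩

theorem add_mul_eq_add_add_mul_of_add_self {A : Type*} [Ring A]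
    (hchar : ∀ a : A, a + a = 0) (p x y c : A) :
    p + x * c = (p + y * c) + (x + y) * c := by
  rw [add_mul, add_assoc p, add_left_comm (y * c), hchar (y * c), add_zero]

theorem stmt_8_general {A : Type*} [Ring A] (d : A →+ A)
    (hchar : ∀ a : A, a + a = 0)
    (hleib : ∀ u v : A, d (u * v) = d u * v + u * d v)
    (a₀ a₁ a₂ a₃ : A)
    (hc3 : d a₃ = 0) :
    (∃ a01 a12 a23, d a01 = a₀ * a₁ ∧ d a12 = a₁ * a₂ ∧ d a23 = a₂ * a₃ ∧
      (∃ u, d u = a₀ * a12 + a01 * a₂) ∧ (∃ u, d u = a₁ * a23 + a12 * a₃)) ↔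
    (∃ x y, d x = a₁ * a₂ ∧
      (∃ z, d z = a₀ * a₁ ∧ ∃ u, d u = a₀ * x + z * a₂) ∧
      d y = a₁ * a₂ ∧
      (∃ w, d w = a₂ * a₃ ∧ ∃ u, d u = a₁ * w + y * a₃) ∧
      ∃ u, d u = x + y) := by
  constructor
  · rintro ⟨a01, a12, a23, h01, h12, h23, hu1, hu2⟩
    exact ⟨a12, a12, h12, ⟨a01, h01, hu1⟩, h12, ⟨a23, h23, hu2⟩, ⟨0, by rw [map_zero, hchar]⟩⟩
  · rintro ⟨x, y, hx, ⟨z, hz, hu1⟩, -, ⟨w, hw, hu2⟩, hxy⟩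
    refine ⟨z, x, w, hz, hx, hw, hu1, ?_⟩
    rw [← AddMonoidHom.mem_range, add_mul_eq_add_add_mul_of_add_self hchar _ x y a₃]
    exact d.range.add_mem hu2 (d.mul_mem_range_of_map_eq_zero hleib hxy hc3)

/-- The fourfold Massey product ⟨ā₀,ā₁,ā₂,ā₃⟩ is defined if and only if zero
belongs to the coindeterminacy of ⟨ā₀,ā₁,ā₂⟩ and ⟨ā₁,ā₂,ā₃⟩. -/
theorem stmt_8 {A : Type*} [Ring A] (d : A →+ A)
    (hchar : ∀ a : A, a + a = 0)
    (hdd : ∀ a : A, d (d a) = 0)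
    (hleib : ∀ u v : A, d (u * v) = d u * v + u * d v)
    (a₀ a₁ a₂ a₃ : A)
    (hc0 : d a₀ = 0) (hc1 : d a₁ = 0) (hc2 : d a₂ = 0) (hc3 : d a₃ = 0)
    (hb01 : ∃ u, d u = a₀ * a₁) (hb12 : ∃ u, d u = a₁ * a₂) (hb23 : ∃ u, d u = a₂ * a₃)
    (hz1 : ∃ x z, d x = a₁ * a₂ ∧ d z = a₀ * a₁ ∧ ∃ u, d u = a₀ * x + z * a₂)
    (hz2 : ∃ y w, d y = a₁ * a₂ ∧ d w = a₂ * a₃ ∧ ∃ u, d u = a₁ * w + y * a₃) :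
    (∃ a01 a12 a23, d a01 = a₀ * a₁ ∧ d a12 = a₁ * a₂ ∧ d a23 = a₂ * a₃ ∧
      (∃ u, d u = a₀ * a12 + a01 * a₂) ∧ (∃ u, d u = a₁ * a23 + a12 * a₃)) ↔
    (∃ x y, d x = a₁ * a₂ ∧
      (∃ z, d z = a₀ * a₁ ∧ ∃ u, d u = a₀ * x + z * a₂) ∧
      d y = a₁ * a₂ ∧
      (∃ w, d w = a₂ * a₃ ∧ ∃ u, d u = a₁ * w + y * a₃) ∧
      ∃ u, d u = x + y) :=
  stmt_8_general d hchar hleib a₀ a₁ a₂ a₃ hc3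
end

section
/- If the homology classes ā₀, ā₁, ā₂, ā₃ are unchanged (i.e., aᵢ' is homologous to aᵢ for each i, meaning aᵢ + aᵢ' is a boundary), then the coindeterminacy of ⟨ā₀',ā₁',ā₂'⟩ and ⟨ā₁',ā₂',ā₃'⟩ equals the coindeterminacy of ⟨ā₀,ā₁,ā₂⟩ and ⟨ā₁,ā₂,ā₃⟩ as subsets of H. -/
section

variable {A : Type*} [Ring A] {d : A →+ A}

theorem map_mul_add_mul_of_homologous (hchar : ∀ a : A, a + a = 0)
    (hleib : ∀ u v : A, d (u * v) = d u * v + u * d v) {a a' b b' e f : A}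
    (ha' : d a' = 0) (hb : d b = 0) (he : d e = a + a') (hf : d f = b + b') :
    d (e * b + a' * f) = a * b + a' * b' := by
  rw [map_add, hleib, hleib, he, hf, hb, ha']
  linear_combination (norm := noncomm_ring) hchar (a' * b)

/-- `(z, x)` is a defining system of the Massey product `⟨a, b, c⟩` whose representative
`a x + z c` is a boundary. -/
def IsNullDefiningSystem (d : A →+ A) (a b c z x : A) : Prop :=
  d z = a * b ∧ d x = b * c ∧ ∃ u, d u = a * x + z * c

theorem IsNullDefiningSystem.of_homologous (hchar : ∀ a : A, a + a = 0)
    (hleib : ∀ u v : A, d (u * v) = d u * v + u * d v) {a b c a' b' c' z x e f g : A}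
    (ha' : d a' = 0) (hb : d b = 0) (hb' : d b' = 0) (hc : d c = 0)
    (he : d e = a + a') (hf : d f = b + b') (hg : d g = c + c')
    (h : IsNullDefiningSystem d a b c z x) :
    IsNullDefiningSystem d a' b' c' (z + (e * b + a' * f)) (x + (f * c + b' * g)) := by
  obtain ⟨hz, hx, u, hu⟩ := h
  have hefb := map_mul_add_mul_of_homologous hchar hleib ha' hb he hf
  have hfgc := map_mul_add_mul_of_homologous hchar hleib hb' hc hf hg
  refine ⟨?_, ?_, u + e * x + z * g + (e * b + a' * f) * g, ?_⟩
  · rw [map_add, hz, hefb]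
    linear_combination (norm := noncomm_ring) hchar (a * b)
  · rw [map_add, hx, hfgc]
    linear_combination (norm := noncomm_ring) hchar (b * c)
  · rw [map_add, map_add, map_add, hleib, hleib, hleib, hu, he, hx, hz, hg, hefb]
    linear_combination (norm := noncomm_ring)
      hchar (a * x) + hchar (z * c) + hchar (a * b * g) + hchar (e * b * c)

theorem coindMem.of_homologous (hchar : ∀ a : A, a + a = 0)
    (hleib : ∀ u v : A, d (u * v) = d u * v + u * d v) {a₀ a₁ a₂ a₃ a₀' a₁' a₂' a₃' s : A}
    (hc1 : d a₁ = 0) (hc2 : d a₂ = 0) (hc3 : d a₃ = 0)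
    (hc0' : d a₀' = 0) (hc1' : d a₁' = 0) (hc2' : d a₂' = 0)
    (hh0 : ∃ u, d u = a₀ + a₀') (hh1 : ∃ u, d u = a₁ + a₁')
    (hh2 : ∃ u, d u = a₂ + a₂') (hh3 : ∃ u, d u = a₃ + a₃')
    (h : coindMem d a₀ a₁ a₂ a₃ s) : coindMem d a₀' a₁' a₂' a₃' s := by
  obtain ⟨e₀, he₀⟩ := hh0
  obtain ⟨e₁, he₁⟩ := hh1
  obtain ⟨e₂, he₂⟩ := hh2
  obtain ⟨e₃, he₃⟩ := hh3
  obtain ⟨x, y, hx, ⟨z, hz, hu⟩, hy, ⟨w, hw, hv⟩, t, ht⟩ := h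
  obtain ⟨hz', hx', hu'⟩ := IsNullDefiningSystem.of_homologous hchar hleib hc0' hc1 hc1' hc2
    he₀ he₁ he₂ ⟨hz, hx, hu⟩
  obtain ⟨hy', hw', hv'⟩ := IsNullDefiningSystem.of_homologous hchar hleib hc1' hc2 hc2' hc3
    he₁ he₂ he₃ ⟨hy, hw, hv⟩
  refine ⟨_, _, hx', ⟨_, hz', hu'⟩, hy', ⟨_, hw', hv'⟩, t, ?_⟩
  rw [ht]
  linear_combination (norm := noncomm_ring) -hchar (e₁ * a₂ + a₁' * e₂)

end

theorem stmt_9_general {A : Type*} [Ring A] (d : A →+ A)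
    (hchar : ∀ a : A, a + a = 0)
    (hleib : ∀ u v : A, d (u * v) = d u * v + u * d v)
    (a₀ a₁ a₂ a₃ : A)
    (hc0 : d a₀ = 0) (hc1 : d a₁ = 0) (hc2 : d a₂ = 0) (hc3 : d a₃ = 0)
    (a₀' a₁' a₂' a₃' : A)
    (hc0' : d a₀' = 0) (hc1' : d a₁' = 0) (hc2' : d a₂' = 0) (hc3' : d a₃' = 0)
    (hh0 : ∃ u, d u = a₀ + a₀') (hh1 : ∃ u, d u = a₁ + a₁')
    (hh2 : ∃ u, d u = a₂ + a₂') (hh3 : ∃ u, d u = a₃ + a₃') :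
    ∀ s : A, coindMem d a₀ a₁ a₂ a₃ s ↔ coindMem d a₀' a₁' a₂' a₃' s := fun _ =>
  ⟨coindMem.of_homologous hchar hleib hc1 hc2 hc3 hc0' hc1' hc2' hh0 hh1 hh2 hh3,
    coindMem.of_homologous hchar hleib hc1' hc2' hc3' hc0 hc1 hc2 (add_comm a₀ a₀' ▸ hh0)
      (add_comm a₁ a₁' ▸ hh1) (add_comm a₂ a₂' ▸ hh2) (add_comm a₃ a₃' ▸ hh3)⟩

/-- The coindeterminacy only depends on the homology classes ā₀, ā₁, ā₂, ā₃. -/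
theorem stmt_9 {A : Type*} [Ring A] (d : A →+ A)
    (hchar : ∀ a : A, a + a = 0)
    (hdd : ∀ a : A, d (d a) = 0)
    (hleib : ∀ u v : A, d (u * v) = d u * v + u * d v)
    (a₀ a₁ a₂ a₃ : A)
    (hc0 : d a₀ = 0) (hc1 : d a₁ = 0) (hc2 : d a₂ = 0) (hc3 : d a₃ = 0)
    (hb01 : ∃ u, d u = a₀ * a₁) (hb12 : ∃ u, d u = a₁ * a₂) (hb23 : ∃ u, d u = a₂ * a₃)
    (a₀' a₁' a₂' a₃' : A)
    (hc0' : d a₀' = 0) (hc1' : d a₁' = 0) (hc2' : d a₂' = 0) (hc3' : d a₃' = 0)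
    (hh0 : ∃ u, d u = a₀ + a₀') (hh1 : ∃ u, d u = a₁ + a₁')
    (hh2 : ∃ u, d u = a₂ + a₂') (hh3 : ∃ u, d u = a₃ + a₃')
    (hb01' : ∃ u, d u = a₀' * a₁') (hb12' : ∃ u, d u = a₁' * a₂')
    (hb23' : ∃ u, d u = a₂' * a₃') :
    ∀ s : A, coindMem d a₀ a₁ a₂ a₃ s ↔ coindMem d a₀' a₁' a₂' a₃' s :=
  stmt_9_general d hchar hleib a₀ a₁ a₂ a₃ hc0 hc1 hc2 hc3 a₀' a₁' a₂' a₃' hc0' hc1' hc2' hc3' hh0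
    hh1 hh2 hh3
end

section
/- If the fourfold Massey product ⟨ā₀,ā₁,ā₂,ā₃⟩ is defined, then the coindeterminacy of ⟨ā₀,ā₁,ā₂⟩ and ⟨ā₁,ā₂,ā₃⟩ equals the subgroup (ā₀ \\ ā₂) + (ā₁ // ā₃) of H (i.e., it is the trivial coset). -/
/-!
Fix a defining system `a01, a12, a23` of the fourfold product. Subtracting `a12` turns any
`x` admissible in `⟨ā₀, ā₁, ā₂⟩` into an element of `(ā₀ \\ ā₂)` (witnessed by `z - a01`), and
any `y` admissible in `⟨ā₁, ā₂, ā₃⟩` into an element of `(ā₁ // ā₃)` (witnessed by `w - a23`);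
adding `a12` goes back. In characteristic 2 the two shifts by `a12` cancel in `x + y`.
-/

section DefiningSystem

variable {A : Type*} [Ring A] (d : A →+ A) {a₀ a₁ a₂ a₃ a01 a12 a23 : A}

theorem leftAdmissible_iff_memLD_sub (hd01 : d a01 = a₀ * a₁) (hd12 : d a12 = a₁ * a₂)
    (hbd : ∃ u, d u = a₀ * a12 + a01 * a₂) (x : A) :
    (d x = a₁ * a₂ ∧ ∃ z, d z = a₀ * a₁ ∧ ∃ u, d u = a₀ * x + z * a₂) ↔
      memLD d a₀ a₂ (x - a12) := by
  obtain ⟨v, hv⟩ := hbd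
  constructor
  · rintro ⟨hx, z, hz, u, hu⟩
    refine ⟨by rw [map_sub, hx, hd12, sub_self], z - a01, by rw [map_sub, hz, hd01, sub_self],
      u - v, ?_⟩
    rw [map_sub, hu, hv]
    noncomm_ring
  · rintro ⟨hx, z, hz, u, hu⟩
    refine ⟨by rw [← sub_add_cancel x a12, map_add, hx, hd12, zero_add], z + a01,
      by rw [map_add, hz, hd01, zero_add], u + v, ?_⟩
    rw [map_add, hu, hv]
    noncomm_ring

theorem rightAdmissible_iff_memRD_sub (hd12 : d a12 = a₁ * a₂) (hd23 : d a23 = a₂ * a₃)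
    (hbd : ∃ u, d u = a₁ * a23 + a12 * a₃) (y : A) :
    (d y = a₁ * a₂ ∧ ∃ w, d w = a₂ * a₃ ∧ ∃ u, d u = a₁ * w + y * a₃) ↔
      memRD d a₁ a₃ (y - a12) := by
  obtain ⟨v, hv⟩ := hbd
  constructor
  · rintro ⟨hy, w, hw, u, hu⟩
    refine ⟨by rw [map_sub, hy, hd12, sub_self], w - a23, by rw [map_sub, hw, hd23, sub_self],
      u - v, ?_⟩
    rw [map_sub, hu, hv]
    noncomm_ring
  · rintro ⟨hy, w, hw, u, hu⟩
    refine ⟨by rw [← sub_add_cancel y a12, map_add, hy, hd12, zero_add], w + a23,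
      by rw [map_add, hw, hd23, zero_add], u + v, ?_⟩
    rw [map_add, hu, hv]
    noncomm_ring

end DefiningSystem

theorem add_sub_add_sub_eq_of_add_self_eq_zero {A : Type*} [AddCommGroup A]
    (hchar : ∀ a : A, a + a = 0) (s x y c : A) : s + (x - c) + (y - c) = s + x + y := by
  rw [show s + (x - c) + (y - c) = s + x + y - (c + c) by abel, hchar, sub_zero]

theorem stmt_10_general {A : Type*} [Ring A] (d : A →+ A)
    (hchar : ∀ a : A, a + a = 0)
    (a₀ a₁ a₂ a₃ : A)
    (hdef : ∃ a01 a12 a23, d a01 = a₀ * a₁ ∧ d a12 = a₁ * a₂ ∧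
      d a23 = a₂ * a₃ ∧ (∃ u, d u = a₀ * a12 + a01 * a₂) ∧
      (∃ u, d u = a₁ * a23 + a12 * a₃)) :
    ∀ s : A, coindMem d a₀ a₁ a₂ a₃ s ↔
      ∃ c₁ c₂, memLD d a₀ a₂ c₁ ∧ memRD d a₁ a₃ c₂ ∧
        ∃ u, d u = s + c₁ + c₂ := by
  obtain ⟨a01, a12, a23, hd01, hd12, hd23, hbd₀, hbd₁⟩ := hdef
  have hL := leftAdmissible_iff_memLD_sub d hd01 hd12 hbd₀
  have hR := rightAdmissible_iff_memRD_sub d hd12 hd23 hbd₁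
  have hshift := add_sub_add_sub_eq_of_add_self_eq_zero hchar
  intro s
  constructor
  · rintro ⟨x, y, hx, hz, hy, hw, hs⟩
    exact ⟨x - a12, y - a12, (hL x).1 ⟨hx, hz⟩, (hR y).1 ⟨hy, hw⟩, hshift s x y a12 ▸ hs⟩
  · rintro ⟨c₁, c₂, h₁, h₂, hs⟩
    obtain ⟨hx, hz⟩ := (hL (c₁ + a12)).2 (by rwa [add_sub_cancel_right])
    obtain ⟨hy, hw⟩ := (hR (c₂ + a12)).2 (by rwa [add_sub_cancel_right])
    refine ⟨c₁ + a12, c₂ + a12, hx, hz, hy, hw, ?_⟩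
    rwa [← hshift s, add_sub_cancel_right, add_sub_cancel_right]

/-- If the fourfold Massey product is defined, the coindeterminacy equals the
subgroup (ā₀ \\ ā₂) + (ā₁ // ā₃), i.e. is the trivial coset. -/
theorem stmt_10 {A : Type*} [Ring A] (d : A →+ A)
    (hchar : ∀ a : A, a + a = 0)
    (hdd : ∀ a : A, d (d a) = 0)
    (hleib : ∀ u v : A, d (u * v) = d u * v + u * d v)
    (a₀ a₁ a₂ a₃ : A)
    (hc0 : d a₀ = 0) (hc1 : d a₁ = 0) (hc2 : d a₂ = 0) (hc3 : d a₃ = 0)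
    (hb01 : ∃ u, d u = a₀ * a₁) (hb12 : ∃ u, d u = a₁ * a₂) (hb23 : ∃ u, d u = a₂ * a₃)
    (hdef : ∃ a01 a12 a23, d a01 = a₀ * a₁ ∧ d a12 = a₁ * a₂ ∧
      d a23 = a₂ * a₃ ∧ (∃ u, d u = a₀ * a12 + a01 * a₂) ∧
      (∃ u, d u = a₁ * a23 + a12 * a₃)) :
    ∀ s : A, coindMem d a₀ a₁ a₂ a₃ s ↔
      ∃ c₁ c₂, memLD d a₀ a₂ c₁ ∧ memRD d a₁ a₃ c₂ ∧
        ∃ u, d u = s + c₁ + c₂ :=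
  stmt_10_general d hchar a₀ a₁ a₂ a₃ hdef
end

section
/- In the DGA A', the fourfold Massey product ⟨ā₀,ā₁,ā₂,ā₃⟩ is NOT defined: there do not exist b₀₁, b₁₂, b₂₃ in A' with d(b₀₁)=a₀a₁, d(b₁₂)=a₁a₂, d(b₂₃)=a₂a₃ such that both a₀b₁₂ + b₀₁a₂ and a₁b₂₃ + b₁₂a₃ are boundaries. -/
/-!
Every generator of A' has zero or quadratic differential, so the quadratic part of `d p` only
sees the linear part of `p`: the coefficient of a quadratic monomial `t` in `d p` is
`∑ᵢ [Xᵢ]p · [t] d(Xᵢ)`. Reading off such coefficients: `d b₂₃ = a₂a₃` forces `a₂₃` into `b₂₃`;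
then the `a₁a₂₃`-coefficient of `d v = a₁b₂₃ + b₁₂a₃` forces `a₁₃` into `v`, whose `ca₃`-coefficient
forces `c` into `b₁₂`. But then `a₀b₁₂ + b₀₁a₂` contains `ca₀`, which no generator's differential
contains, so it is not a boundary.
-/

open MvPolynomial

/-- The polynomial algebra over F₂ on generators
a₀, a₁, a₂, a₃, a₀₁, a₁₂, a₂₃, c, a₀₂, a₁₃ (indices 0,…,9). -/
abbrev P : Type := MvPolynomial (Fin 10) (ZMod 2)

/-- Values of the differential of A' on the generators: as for A except
d(a₁₃)=a₁a₂₃+(a₁₂+c)a₃. -/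
noncomputable def dvalA' : Fin 10 → P :=
  ![0, 0, 0, 0, X 0 * X 1, X 1 * X 2, X 2 * X 3, 0,
    X 0 * X 5 + X 4 * X 2, X 1 * X 6 + (X 5 + X 7) * X 3]

/-- The differential of A': the unique F₂-linear derivation with the values
`dvalA'` on the generators. -/
noncomputable def dA' : P → P := fun p => mkDerivation (ZMod 2) dvalA' p

namespace MvPolynomial

variable {σ R : Type*} [CommSemiring R]

theorem mkDerivation_eq_sum_pderiv [Fintype σ] (f : σ → MvPolynomial σ R)
    (p : MvPolynomial σ R) : mkDerivation R f p = ∑ i, pderiv i p * f i := by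
  classical
  let D : Derivation R (MvPolynomial σ R) (MvPolynomial σ R) := ∑ i, f i • pderiv i
  have hD (q : MvPolynomial σ R) : D q = ∑ i, pderiv i q * f i := by
    change Derivation.coeFnAddMonoidHom (∑ i, f i • pderiv i) q = _
    simp only [map_sum, Finset.sum_apply, Derivation.coeFnAddMonoidHom_apply,
      Derivation.smul_apply, smul_eq_mul, mul_comm]
  have : mkDerivation R f = D := derivation_ext fun j => by
    simp [hD, mkDerivation_X, pderiv_X, Pi.single_apply]
  rw [this, hD]

theorem coeff_zero_pderiv (i : σ) (p : MvPolynomial σ R) :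
    coeff 0 (pderiv i p) = coeff (Finsupp.single i 1) p := by
  simp [coeff_pderiv]

theorem IsHomogeneous.coeff_mul_of_degree_eq {f : MvPolynomial σ R} {n : ℕ}
    (hf : f.IsHomogeneous n) {t : σ →₀ ℕ} (ht : t.degree = n) (q : MvPolynomial σ R) :
    coeff t (q * f) = coeff 0 q * coeff t f := by
  classical
  rw [coeff_mul, Finset.sum_eq_single (0, t) _ (by simp)]
  rintro ⟨x, y⟩ hxy hne
  rw [Finset.HasAntidiagonal.mem_antidiagonal] at hxy
  dsimp only at hxy ⊢
  by_cases hy : y.degree = n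
  · have hx : x.degree = 0 := by
      have := congrArg Finsupp.degree hxy
      rw [map_add] at this
      omega
    rw [Finsupp.degree_eq_zero_iff] at hx
    subst hx
    simp_all
  · rw [hf.coeff_eq_zero hy, mul_zero]

theorem coeff_mkDerivation_of_isHomogeneous [Fintype σ] {f : σ → MvPolynomial σ R} {n : ℕ}
    (hf : ∀ i, (f i).IsHomogeneous n) {t : σ →₀ ℕ} (ht : t.degree = n) (p : MvPolynomial σ R) :
    coeff t (mkDerivation R f p) = ∑ i, coeff (Finsupp.single i 1) p * coeff t (f i) := by
  simp only [mkDerivation_eq_sum_pderiv, coeff_sum, (hf _).coeff_mul_of_degree_eq ht,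
    coeff_zero_pderiv]

theorem coeff_single_add_single_X_mul_X [DecidableEq σ] (a b c d : σ) :
    coeff (Finsupp.single a 1 + Finsupp.single b 1) (X c * X d : MvPolynomial σ R) =
      if (c = a ∧ d = b) ∨ (c = b ∧ d = a) then 1 else 0 := by
  rw [X, X, monomial_mul, one_mul, coeff_monomial]
  simp [Finsupp.single_add_single_eq_single_add_single one_ne_zero one_ne_zero]

end MvPolynomial

theorem isHomogeneous_dvalA' (i : Fin 10) : (dvalA' i).IsHomogeneous 2 := by
  have hX (a b : Fin 10) : (X a * X b : P).IsHomogeneous 2 :=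
    (isHomogeneous_X _ _).mul (isHomogeneous_X _ _)
  fin_cases i <;> simp [dvalA', isHomogeneous_zero, hX, add_mul, IsHomogeneous.add]

section

open Finsupp

theorem coeff_dA' {t : Fin 10 →₀ ℕ} (ht : t.degree = 2) (p : P) :
    coeff t (dA' p) = ∑ i, coeff (single i 1) p * coeff t (dvalA' i) :=
  coeff_mkDerivation_of_isHomogeneous isHomogeneous_dvalA' ht p

theorem coeff_a₂a₃_dA' (p : P) :
    coeff (single 2 1 + single 3 1) (dA' p) = coeff (single 6 1) p := by
  simp [coeff_dA', Fin.sum_univ_succ, dvalA', add_mul, coeff_single_add_single_X_mul_X]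

theorem coeff_a₁a₂₃_dA' (p : P) :
    coeff (single 1 1 + single 6 1) (dA' p) = coeff (single 9 1) p := by
  simp [coeff_dA', Fin.sum_univ_succ, dvalA', add_mul, coeff_single_add_single_X_mul_X]

theorem coeff_ca₃_dA' (p : P) :
    coeff (single 7 1 + single 3 1) (dA' p) = coeff (single 9 1) p := by
  simp [coeff_dA', Fin.sum_univ_succ, dvalA', add_mul, coeff_single_add_single_X_mul_X]

theorem coeff_ca₀_dA' (p : P) : coeff (single 7 1 + single 0 1) (dA' p) = 0 := by
  simp [coeff_dA', Fin.sum_univ_succ, dvalA', add_mul, coeff_single_add_single_X_mul_X]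

end

/-- In A', the fourfold Massey product ⟨ā₀,ā₁,ā₂,ā₃⟩ is not defined. -/
theorem stmt_13 :
    ¬ ∃ b01 b12 b23 : P, dA' b01 = X 0 * X 1 ∧ dA' b12 = X 1 * X 2 ∧
      dA' b23 = X 2 * X 3 ∧
      (∃ u, dA' u = X 0 * b12 + b01 * X 2) ∧
      (∃ u, dA' u = X 1 * b23 + b12 * X 3) := by
  rintro ⟨b01, b12, b23, -, -, hd23, ⟨u, hu⟩, ⟨v, hv⟩⟩
  have hb23 : coeff (Finsupp.single 6 1) b23 = 1 := by
    rw [← coeff_a₂a₃_dA', hd23, coeff_single_add_single_X_mul_X]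
    simp
  have hv13 : coeff (Finsupp.single 9 1) v = 1 := by
    rw [← coeff_a₁a₂₃_dA', hv]
    simp [coeff_X_mul', coeff_mul_X', hb23]
  have hb12 : coeff (Finsupp.single 7 1) b12 = 1 := by
    rw [← hv13, ← coeff_ca₃_dA', hv]
    simp [coeff_X_mul', coeff_mul_X']
  have hca₀ := coeff_ca₀_dA' u
  rw [hu] at hca₀
  simp [coeff_X_mul', coeff_mul_X', hb12] at hca₀
end

section
/- Suppose both threefold brackets ⟨ā₀,ā₁,ā₂⟩ and ⟨ā₁,ā₂,ā₃⟩ contain zero, and at least one of them is strictly zero (every representative is a boundary). Then the fourfold Massey product ⟨ā₀,ā₁,ā₂,ā₃⟩ is defined. -/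
theorem stmt_16_general {A : Type*} [Ring A] (d : A →+ A)
    (a₀ a₁ a₂ a₃ : A)
    (hz1 : ∃ x z, d x = a₁ * a₂ ∧ d z = a₀ * a₁ ∧ ∃ u, d u = a₀ * x + z * a₂)
    (hz2 : ∃ y w, d y = a₁ * a₂ ∧ d w = a₂ * a₃ ∧ ∃ u, d u = a₁ * w + y * a₃)
    (hstrict :
      (∀ x z, d x = a₁ * a₂ → d z = a₀ * a₁ → ∃ u, d u = a₀ * x + z * a₂) ∨
      (∀ y w, d y = a₁ * a₂ → d w = a₂ * a₃ → ∃ u, d u = a₁ * w + y * a₃)) :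
    ∃ a01 a12 a23, d a01 = a₀ * a₁ ∧ d a12 = a₁ * a₂ ∧ d a23 = a₂ * a₃ ∧
      (∃ u, d u = a₀ * a12 + a01 * a₂) ∧ (∃ u, d u = a₁ * a23 + a12 * a₃) := by
  obtain ⟨x, z, hx, hz, hxz⟩ := hz1
  obtain ⟨y, w, hy, hw, hyw⟩ := hz2
  -- The middle cochain `a12` is taken from the bracket that is not strictly zero;
  -- strictness of the other bracket then holds for that choice automatically.
  rcases hstrict with hstrict₁ | hstrict₂
  · exact ⟨z, y, w, hz, hy, hw, hstrict₁ y z hy hz, hyw⟩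
  · exact ⟨z, x, w, hz, hx, hw, hxz, hstrict₂ x w hx hw⟩

/-- If both threefold brackets contain zero and at least one is strictly zero,
then the fourfold Massey product is defined. -/
theorem stmt_16 {A : Type*} [Ring A] (d : A →+ A)
    (hchar : ∀ a : A, a + a = 0)
    (hdd : ∀ a : A, d (d a) = 0)
    (hleib : ∀ u v : A, d (u * v) = d u * v + u * d v)
    (a₀ a₁ a₂ a₃ : A)
    (hc0 : d a₀ = 0) (hc1 : d a₁ = 0) (hc2 : d a₂ = 0) (hc3 : d a₃ = 0)
    (hb01 : ∃ u, d u = a₀ * a₁) (hb12 : ∃ u, d u = a₁ * a₂) (hb23 : ∃ u, d u = a₂ * a₃)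
    (hz1 : ∃ x z, d x = a₁ * a₂ ∧ d z = a₀ * a₁ ∧ ∃ u, d u = a₀ * x + z * a₂)
    (hz2 : ∃ y w, d y = a₁ * a₂ ∧ d w = a₂ * a₃ ∧ ∃ u, d u = a₁ * w + y * a₃)
    (hstrict :
      (∀ x z, d x = a₁ * a₂ → d z = a₀ * a₁ → ∃ u, d u = a₀ * x + z * a₂) ∨
      (∀ y w, d y = a₁ * a₂ → d w = a₂ * a₃ → ∃ u, d u = a₁ * w + y * a₃)) :
    ∃ a01 a12 a23, d a01 = a₀ * a₁ ∧ d a12 = a₁ * a₂ ∧ d a23 = a₂ * a₃ ∧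
      (∃ u, d u = a₀ * a12 + a01 * a₂) ∧ (∃ u, d u = a₁ * a23 + a12 * a₃) :=
  stmt_16_general d a₀ a₁ a₂ a₃ hz1 hz2 hstrict
end

section
/- If zero belongs to the coindeterminacy of ⟨ā₀,ā₁,ā₂⟩ and ⟨ā₁,ā₂,ā₃⟩, i.e., there exist x, y with d(x) = d(y) = a₁a₂ satisfying the respective boundary conditions and with x + y a boundary, then there exists a common element u with d(u) = a₁a₂ such that a₀u + za₂ is a boundary for some z with d(z) = a₀a₁, AND a₁w + ua₃ is a boundary for some w with d(w) = a₂a₃. -/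
/-! Take `u = x`. The first bracket condition is the one `x` already satisfies, and in
characteristic two `a₁w + xa₃ = (a₁w + ya₃) + (x + y)a₃`, a sum of two boundaries, the second
being a boundary times a cycle. -/

theorem AddMonoidHom.mul_mem_mrange_of_map_eq_zero {A : Type*} [NonUnitalNonAssocSemiring A]
    (d : A →+ A) (hleib : ∀ u v : A, d (u * v) = d u * v + u * d v) {b c : A}
    (hb : b ∈ AddMonoidHom.mrange d) (hc : d c = 0) : b * c ∈ AddMonoidHom.mrange d := by
  obtain ⟨u, rfl⟩ := hb
  exact ⟨u * c, by rw [hleib, hc, mul_zero, add_zero]⟩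

theorem stmt_17_general {A : Type*} [Ring A] (d : A →+ A)
    (hchar : ∀ a : A, a + a = 0)
    (hleib : ∀ u v : A, d (u * v) = d u * v + u * d v)
    (a₀ a₁ a₂ a₃ : A)
    (hc3 : d a₃ = 0) :
    ∀ x y : A, d x = a₁ * a₂ →
      (∃ z, d z = a₀ * a₁ ∧ ∃ u, d u = a₀ * x + z * a₂) →
      d y = a₁ * a₂ →
      (∃ w, d w = a₂ * a₃ ∧ ∃ u, d u = a₁ * w + y * a₃) →
      (∃ u, d u = x + y) →
      ∃ v, d v = a₁ * a₂ ∧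
        (∃ z, d z = a₀ * a₁ ∧ ∃ u, d u = a₀ * v + z * a₂) ∧
        (∃ w, d w = a₂ * a₃ ∧ ∃ u, d u = a₁ * w + v * a₃) := by
  rintro x y hx hx_bracket - ⟨w, hw, hy_bracket⟩ hxy
  refine ⟨x, hx, hx_bracket, w, hw, ?_⟩
  have hsplit : a₁ * w + x * a₃ = (a₁ * w + y * a₃) + (x + y) * a₃ :=
    calc a₁ * w + x * a₃ = a₁ * w + x * a₃ + (y * a₃ + y * a₃) := by rw [hchar, add_zero]
      _ = (a₁ * w + y * a₃) + (x + y) * a₃ := by rw [add_mul]; abel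
  rw [hsplit]
  exact add_mem hy_bracket (d.mul_mem_mrange_of_map_eq_zero hleib hxy hc3)

/-- If zero belongs to the coindeterminacy then there is a single common choice
u = a₁₂ working for both threefold brackets. -/
theorem stmt_17 {A : Type*} [Ring A] (d : A →+ A)
    (hchar : ∀ a : A, a + a = 0)
    (hdd : ∀ a : A, d (d a) = 0)
    (hleib : ∀ u v : A, d (u * v) = d u * v + u * d v)
    (a₀ a₁ a₂ a₃ : A)
    (hc0 : d a₀ = 0) (hc1 : d a₁ = 0) (hc2 : d a₂ = 0) (hc3 : d a₃ = 0)
    (hb01 : ∃ u, d u = a₀ * a₁) (hb12 : ∃ u, d u = a₁ * a₂) (hb23 : ∃ u, d u = a₂ * a₃) :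
    ∀ x y : A, d x = a₁ * a₂ →
      (∃ z, d z = a₀ * a₁ ∧ ∃ u, d u = a₀ * x + z * a₂) →
      d y = a₁ * a₂ →
      (∃ w, d w = a₂ * a₃ ∧ ∃ u, d u = a₁ * w + y * a₃) →
      (∃ u, d u = x + y) →
      ∃ v, d v = a₁ * a₂ ∧
        (∃ z, d z = a₀ * a₁ ∧ ∃ u, d u = a₀ * v + z * a₂) ∧
        (∃ w, d w = a₂ * a₃ ∧ ∃ u, d u = a₁ * w + v * a₃) :=
  stmt_17_general d hchar hleib a₀ a₁ a₂ a₃ hc3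
end

section
/- If x satisfies d(x) = a₁a₂ and a₀x + za₂ is a boundary for some z with d(z) = a₀a₁, and y satisfies d(y) = a₁a₂ and a₁w + ya₃ is a boundary for some w with d(w) = a₂a₃, then the homology class of x + y (an element of the coindeterminacy) depends only on the data up to the stated choices; moreover if x' and y' are another such pair, then (x+y) + (x'+y') is a cycle whose class lies in (ā₀ \\ ā₂) + (ā₁ // ā₃). -/
theorem AddMonoidHom.map_add_eq_zero_of_map_eq {M N : Type*} [AddMonoid M] [AddMonoid N]
    (f : M →+ N) (hN : ∀ b : N, b + b = 0) {x x' : M} (h : f x = f x') : f (x + x') = 0 := by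
  rw [map_add, h, hN]

theorem memLD_add {A : Type*} [Ring A] (d : A →+ A) (hchar : ∀ a : A, a + a = 0)
    {a b x x' z z' : A} (hx : d x = d x') (hz : d z = d z')
    (hu : a * x + z * b ∈ d.range) (hu' : a * x' + z' * b ∈ d.range) :
    memLD d a b (x + x') := by
  refine ⟨d.map_add_eq_zero_of_map_eq hchar hx, z + z', d.map_add_eq_zero_of_map_eq hchar hz, ?_⟩
  rw [← AddMonoidHom.mem_range]
  convert add_mem hu hu' using 1
  rw [mul_add, add_mul]
  abel

theorem memRD_add {A : Type*} [Ring A] (d : A →+ A) (hchar : ∀ a : A, a + a = 0)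
    {a b y y' w w' : A} (hy : d y = d y') (hw : d w = d w')
    (hv : a * w + y * b ∈ d.range) (hv' : a * w' + y' * b ∈ d.range) :
    memRD d a b (y + y') := by
  refine ⟨d.map_add_eq_zero_of_map_eq hchar hy, w + w', d.map_add_eq_zero_of_map_eq hchar hw, ?_⟩
  rw [← AddMonoidHom.mem_range]
  convert add_mem hv hv' using 1
  rw [mul_add, add_mul]
  abel

theorem stmt_19_general {A : Type*} [Ring A] (d : A →+ A)
    (hchar : ∀ a : A, a + a = 0)
    (a₀ a₁ a₂ a₃ : A) :
    ∀ x y x' y' : A,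
      d x = a₁ * a₂ → (∃ z, d z = a₀ * a₁ ∧ ∃ u, d u = a₀ * x + z * a₂) →
      d y = a₁ * a₂ → (∃ w, d w = a₂ * a₃ ∧ ∃ u, d u = a₁ * w + y * a₃) →
      d x' = a₁ * a₂ → (∃ z, d z = a₀ * a₁ ∧ ∃ u, d u = a₀ * x' + z * a₂) →
      d y' = a₁ * a₂ → (∃ w, d w = a₂ * a₃ ∧ ∃ u, d u = a₁ * w + y' * a₃) →
      d (x + y + x' + y') = 0 ∧
        ∃ c₁ c₂, memLD d a₀ a₂ c₁ ∧ memRD d a₁ a₃ c₂ ∧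
          ∃ u, d u = x + y + x' + y' + c₁ + c₂ := by
  rintro x y x' y' hx ⟨z, hz, hu⟩ hy ⟨w, hw, hv⟩ hx' ⟨z', hz', hu'⟩ hy' ⟨w', hw', hv'⟩
  have hLD := memLD_add d hchar (hx.trans hx'.symm) (hz.trans hz'.symm) hu hu'
  have hRD := memRD_add d hchar (hy.trans hy'.symm) (hw.trans hw'.symm) hv hv'
  refine ⟨?_, x + x', y + y', hLD, hRD, 0, ?_⟩
  · rw [show x + y + x' + y' = (x + x') + (y + y') by abel, map_add, hLD.1, hRD.1, add_zero]
  · rw [map_zero, show x + y + x' + y' + (x + x') + (y + y') =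
      (x + y + x' + y') + (x + y + x' + y') by abel, hchar]

/-- The sum of two representatives of the coindeterminacy is a cycle whose
class lies in (ā₀ \\ ā₂) + (ā₁ // ā₃). -/
theorem stmt_19 {A : Type*} [Ring A] (d : A →+ A)
    (hchar : ∀ a : A, a + a = 0)
    (hdd : ∀ a : A, d (d a) = 0)
    (hleib : ∀ u v : A, d (u * v) = d u * v + u * d v)
    (a₀ a₁ a₂ a₃ : A)
    (hc0 : d a₀ = 0) (hc1 : d a₁ = 0) (hc2 : d a₂ = 0) (hc3 : d a₃ = 0)
    (hb01 : ∃ u, d u = a₀ * a₁) (hb12 : ∃ u, d u = a₁ * a₂) (hb23 : ∃ u, d u = a₂ * a₃) :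
    ∀ x y x' y' : A,
      d x = a₁ * a₂ → (∃ z, d z = a₀ * a₁ ∧ ∃ u, d u = a₀ * x + z * a₂) →
      d y = a₁ * a₂ → (∃ w, d w = a₂ * a₃ ∧ ∃ u, d u = a₁ * w + y * a₃) →
      d x' = a₁ * a₂ → (∃ z, d z = a₀ * a₁ ∧ ∃ u, d u = a₀ * x' + z * a₂) →
      d y' = a₁ * a₂ → (∃ w, d w = a₂ * a₃ ∧ ∃ u, d u = a₁ * w + y' * a₃) →
      d (x + y + x' + y') = 0 ∧
        ∃ c₁ c₂, memLD d a₀ a₂ c₁ ∧ memRD d a₁ a₃ c₂ ∧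
          ∃ u, d u = x + y + x' + y' + c₁ + c₂ :=
  stmt_19_general d hchar a₀ a₁ a₂ a₃
end
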